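/- Let G be a valued group satisfying axiom (D6): if f ≠ 1, g ≠ 1 and f ≍ g then ⁅f,g⁆ ≺ f, where ⁅f,g⁆ := f⁻¹*g⁻¹*f*g. Then for all f, g ∈ G with f ≠ 1, g ≠ 1 and f ≍ g: if f*g ≺ f then g*f ≺ f; and if ¬(f*g ≺ f) then (f*g)*(g*f)⁻¹ ≺ f*g (i.e. f*g ∼ g*f). (Hence the residue group at each value is Abelian.) -/

import Mathlib

/-!
Conjugation by `f⁻¹` carries `f * g` to `g * f` and fixes `f`, so by D3 it preserves whether
`f * g ≺ f`. Otherwise `f ⪯ f * g`, and D6 applied to `f⁻¹ ≍ g⁻¹` gives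
`(f * g) * (g * f)⁻¹ = f * g * f⁻¹ * g⁻¹ ≺ f⁻¹ ≍ f ⪯ f * g`.
-/

variable {G : Type*} [Group G]

/-- `f ≺ g` : strict part of the dominance relation. -/
def vlt (le : G → G → Prop) (f g : G) : Prop := le f g ∧ ¬ le g f

/-- `f ≍ g` : equivalence induced by the dominance relation. -/
def veq (le : G → G → Prop) (f g : G) : Prop := le f g ∧ le g f

/-- A dominance relation on a group `G`, making it a valued group:
a reflexive, transitive, total relation satisfying D1-D4. -/
structure IsValuation (le : G → G → Prop) : Prop where
  refl : ∀ f : G, le f f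
  trans : ∀ f g h : G, le f g → le g h → le f h
  total : ∀ f g : G, le f g ∨ le g f
  d1 : ∀ f : G, f ≠ 1 → vlt le 1 f
  d2 : ∀ f g : G, le (f * g) f ∨ le (f * g) g
  d3 : ∀ f g h : G, le f g → le (h * f * h⁻¹) (h * g * h⁻¹)
  d4 : ∀ f : G, veq le f f⁻¹

namespace IsValuation

variable {le : G → G → Prop} (hv : IsValuation le)
include hv

theorem vlt_of_vlt_of_le {f g h : G} (hfg : vlt le f g) (hgh : le g h) : vlt le f h :=
  ⟨hv.trans _ _ _ hfg.1 hgh, fun hhf => hfg.2 (hv.trans _ _ _ hgh hhf)⟩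

theorem le_of_not_vlt {f g : G} (h : ¬ vlt le f g) : le g f :=
  (hv.total g f).elim id fun hgf => not_not.mp fun hfg => h ⟨hgf, hfg⟩

theorem conj_le_conj_iff {f g : G} (h : G) :
    le (h * f * h⁻¹) (h * g * h⁻¹) ↔ le f g := by
  refine ⟨fun hle => ?_, hv.d3 f g h⟩
  simpa only [inv_inv, mul_assoc, inv_mul_cancel_left, inv_mul_cancel, mul_one] using
    hv.d3 _ _ h⁻¹ hle

theorem conj_vlt_conj_iff {f g : G} (h : G) :
    vlt le (h * f * h⁻¹) (h * g * h⁻¹) ↔ vlt le f g := by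
  simp only [vlt, hv.conj_le_conj_iff]

theorem veq_inv_inv {f g : G} (hfg : veq le f g) : veq le f⁻¹ g⁻¹ :=
  have inv_le {a b : G} (hab : le a b) : le a⁻¹ b⁻¹ :=
    hv.trans _ _ _ (hv.d4 a).2 (hv.trans _ _ _ hab (hv.d4 b).1)
  ⟨inv_le hfg.1, inv_le hfg.2⟩

theorem vlt_mul_comm_of_vlt {f g : G} (h : vlt le (f * g) f) : vlt le (g * f) f := by
  rw [← hv.conj_vlt_conj_iff f⁻¹] at h
  simpa only [inv_inv, inv_mul_cancel_left, mul_inv_cancel_right, inv_mul_cancel, one_mul] using h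

end IsValuation

/-- Proposition 2.30 (residue groups are Abelian): in a valued group satisfying D6,
for nonidentity `f ≍ g`: if `f*g ≺ f` then `g*f ≺ f`, and otherwise `f*g ∼ g*f`,
i.e. `(f*g)*(g*f)⁻¹ ≺ f*g`. -/
theorem residue_abelian (le : G → G → Prop) (hv : IsValuation le)
    (hd6 : ∀ f g : G, f ≠ 1 → g ≠ 1 → veq le f g → vlt le (f⁻¹ * g⁻¹ * f * g) f) :
    ∀ f g : G, f ≠ 1 → g ≠ 1 → veq le f g →
      (vlt le (f * g) f → vlt le (g * f) f) ∧
      (¬ vlt le (f * g) f → vlt le ((f * g) * (g * f)⁻¹) (f * g)) := by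
  intro f g hf hg hfg
  refine ⟨hv.vlt_mul_comm_of_vlt, fun hfg_not_lt => ?_⟩
  have hf_le_fg : le f⁻¹ (f * g) := hv.trans _ _ _ (hv.d4 f).2 (hv.le_of_not_vlt hfg_not_lt)
  have hcomm := hd6 f⁻¹ g⁻¹ (inv_ne_one.mpr hf) (inv_ne_one.mpr hg) (hv.veq_inv_inv hfg)
  rw [show f⁻¹⁻¹ * g⁻¹⁻¹ * f⁻¹ * g⁻¹ = f * g * (g * f)⁻¹ by group] at hcomm
  exact hv.vlt_of_vlt_of_le hcomm hf_le_fg
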